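/- arXiv:0807.4069 — 2 statements merged into one kernel-verified Lean document; each statement's English description precedes it below -/
import Mathlib

section
/- The fictitious arrival time t̃₀ : [0,∞) → [t₀,∞), where t₀ = t̃₀(0), is a bijection (in particular continuous, strictly increasing, and tending to +∞ as q → ∞). -/
/-!
For a fixed refraction point `ξ` the travel time `L⁺(ξ) s⁺(q) + L⁻(ξ) s⁻(q)` is linear in the
slownesses `s^±(q) = 1 / 𝐕^±(q) = √(1 + (V^±)² q²) / V^±`, so `t̃₀(q) = Φ (s⁺ q, s⁻ q)` with
`Φ = minTravelTime` an infimum of linear forms with nonnegative coefficients. Such a `Φ` is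
concave on the positive quadrant, hence continuous there. Since `L⁺(ξ) ≥ h > 0`, raising the
slownesses raises `Φ` by at least `h` times the increase of `s⁺`, and `s⁺` is strictly increasing
and unbounded on `[0, ∞)`. The intermediate value theorem then gives the bijection.
-/

open Set Filter

theorem ContinuousOn.bijOn_Ici_of_strictMonoOn {α δ : Type*} [ConditionallyCompleteLinearOrder α]
    [TopologicalSpace α] [OrderTopology α] [DenselyOrdered α] [LinearOrder δ]
    [TopologicalSpace δ] [OrderClosedTopology δ] {f : α → δ} {a : α}
    (hf : ContinuousOn f (Ici a)) (hmono : StrictMonoOn f (Ici a))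
    (htop : Tendsto f atTop atTop) : BijOn f (Ici a) (Ici (f a)) :=
  hf.image_Ici_of_monotoneOn hmono.monotoneOn htop ▸ hmono.injOn.bijOn_image

/-- Path `i` has length `a i` in the upper medium and `b i` in the lower one; `s` is the pair
of slownesses (reciprocal speeds). -/
noncomputable def minTravelTime {ι : Type*} (a b : ι → ℝ) (s : ℝ × ℝ) : ℝ :=
  ⨅ i, a i * s.1 + b i * s.2

namespace minTravelTime

variable {ι : Type*} {a b : ι → ℝ}

theorem bddBelow (ha : ∀ i, 0 ≤ a i) (hb : ∀ i, 0 ≤ b i) {s : ℝ × ℝ} (h₁ : 0 ≤ s.1)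
    (h₂ : 0 ≤ s.2) : BddBelow (range fun i => a i * s.1 + b i * s.2) := by
  refine ⟨0, ?_⟩
  rintro _ ⟨i, rfl⟩
  have := ha i
  have := hb i
  positivity

theorem concaveOn [Nonempty ι] (ha : ∀ i, 0 ≤ a i) (hb : ∀ i, 0 ≤ b i) :
    ConcaveOn ℝ (Ici 0 ×ˢ Ici 0) (minTravelTime a b) := by
  refine ⟨convex_Ici 0 |>.prod (convex_Ici 0), ?_⟩
  rintro s ⟨hs₁, hs₂⟩ t ⟨ht₁, ht₂⟩ α β hα hβ -
  refine le_ciInf fun i => ?_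
  have hs : minTravelTime a b s ≤ _ := ciInf_le (bddBelow ha hb hs₁ hs₂) i
  have ht : minTravelTime a b t ≤ _ := ciInf_le (bddBelow ha hb ht₁ ht₂) i
  simp only [Prod.fst_add, Prod.snd_add, Prod.smul_fst, Prod.smul_snd, smul_eq_mul]
  calc α * minTravelTime a b s + β * minTravelTime a b t
      ≤ α * (a i * s.1 + b i * s.2) + β * (a i * t.1 + b i * t.2) := by gcongr
    _ = _ := by ring

theorem continuousOn [Nonempty ι] (ha : ∀ i, 0 ≤ a i) (hb : ∀ i, 0 ≤ b i) :
    ContinuousOn (minTravelTime a b) (Ioi 0 ×ˢ Ioi 0) :=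
  ((concaveOn ha hb).subset (prod_mono Ioi_subset_Ici_self Ioi_subset_Ici_self)
    ((convex_Ioi 0).prod (convex_Ioi 0))).continuousOn (isOpen_Ioi.prod isOpen_Ioi)

theorem add_mul_sub_fst_le [Nonempty ι] {c : ℝ} (hca : ∀ i, c ≤ a i) (hb : ∀ i, 0 ≤ b i)
    (hc : 0 ≤ c) {s t : ℝ × ℝ} (hs₁ : 0 ≤ s.1) (hs₂ : 0 ≤ s.2) (h₁ : s.1 ≤ t.1)
    (h₂ : s.2 ≤ t.2) : minTravelTime a b s + c * (t.1 - s.1) ≤ minTravelTime a b t := by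
  have ha i : 0 ≤ a i := hc.trans (hca i)
  refine le_ciInf fun i => ?_
  have hs : minTravelTime a b s ≤ _ := ciInf_le (bddBelow ha hb hs₁ hs₂) i
  have hc₁ : c * (t.1 - s.1) ≤ a i * (t.1 - s.1) :=
    mul_le_mul_of_nonneg_right (hca i) (sub_nonneg.2 h₁)
  have hb₂ : b i * s.2 ≤ b i * t.2 := mul_le_mul_of_nonneg_left h₂ (hb i)
  linarith

end minTravelTime

noncomputable def slowness (V q : ℝ) : ℝ :=
  Real.sqrt (1 + V ^ 2 * q ^ 2) / V

theorem div_speed_eq_mul_slowness (d V q : ℝ) :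
    d / (V * Real.sqrt (1 / (1 + V ^ 2 * q ^ 2))) = d * slowness V q := by
  rw [slowness, one_div, Real.sqrt_inv, div_eq_mul_inv, mul_inv, inv_inv]
  ring

namespace slowness

variable {V : ℝ}

theorem pos (hV : 0 < V) (q : ℝ) : 0 < slowness V q := by
  unfold slowness
  positivity

@[fun_prop]
theorem continuous (V : ℝ) : Continuous (slowness V) := by
  unfold slowness
  fun_prop

theorem strictMonoOn (hV : 0 < V) : StrictMonoOn (slowness V) (Ici 0) := by
  intro p hp q _ hpq
  have hsq : V ^ 2 * p ^ 2 < V ^ 2 * q ^ 2 := by gcongr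
  exact div_lt_div_of_pos_right (Real.sqrt_lt_sqrt (by positivity) (by linarith)) hV

theorem self_le (hV : 0 < V) (q : ℝ) : q ≤ slowness V q := by
  rw [slowness, le_div_iff₀ hV]
  calc q * V ≤ |q * V| := le_abs_self _
    _ = Real.sqrt ((q * V) ^ 2) := (Real.sqrt_sq_eq_abs _).symm
    _ ≤ Real.sqrt (1 + V ^ 2 * q ^ 2) := Real.sqrt_le_sqrt (by nlinarith)

theorem tendsto_atTop (hV : 0 < V) : Tendsto (slowness V) atTop atTop :=
  tendsto_atTop_mono (self_le hV) tendsto_id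

end slowness

section TwoLayers

variable {ι : Type*} [Nonempty ι] {a b : ι → ℝ} {Vp Vm : ℝ}

theorem continuous_minTravelTime_slowness (ha : ∀ i, 0 ≤ a i) (hb : ∀ i, 0 ≤ b i)
    (hVp : 0 < Vp) (hVm : 0 < Vm) :
    Continuous fun q => minTravelTime a b (slowness Vp q, slowness Vm q) :=
  (minTravelTime.continuousOn ha hb).comp_continuous (by fun_prop)
    fun q => ⟨slowness.pos hVp q, slowness.pos hVm q⟩

theorem minTravelTime_slowness_add_le {c : ℝ} (hc : 0 ≤ c) (hca : ∀ i, c ≤ a i)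
    (hb : ∀ i, 0 ≤ b i) (hVp : 0 < Vp) (hVm : 0 < Vm) {p q : ℝ} (hp : 0 ≤ p)
    (hpq : p ≤ q) :
    minTravelTime a b (slowness Vp p, slowness Vm p) + c * (slowness Vp q - slowness Vp p)
      ≤ minTravelTime a b (slowness Vp q, slowness Vm q) :=
  minTravelTime.add_mul_sub_fst_le (s := (_, _)) (t := (_, _)) hca hb hc
    (slowness.pos hVp p).le (slowness.pos hVm p).le
    ((slowness.strictMonoOn hVp).monotoneOn hp (hp.trans hpq) hpq)
    ((slowness.strictMonoOn hVm).monotoneOn hp (hp.trans hpq) hpq)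

theorem strictMonoOn_minTravelTime_slowness {c : ℝ} (hc : 0 < c) (hca : ∀ i, c ≤ a i)
    (hb : ∀ i, 0 ≤ b i) (hVp : 0 < Vp) (hVm : 0 < Vm) :
    StrictMonoOn (fun q => minTravelTime a b (slowness Vp q, slowness Vm q)) (Ici 0) := by
  intro p hp q hq hpq
  have hgap : 0 < c * (slowness Vp q - slowness Vp p) :=
    mul_pos hc (sub_pos.2 (slowness.strictMonoOn hVp hp hq hpq))
  have := minTravelTime_slowness_add_le hc.le hca hb hVp hVm hp hpq.le
  dsimp only
  linarith

theorem tendsto_minTravelTime_slowness {c : ℝ} (hc : 0 < c) (hca : ∀ i, c ≤ a i)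
    (hb : ∀ i, 0 ≤ b i) (hVp : 0 < Vp) (hVm : 0 < Vm) :
    Tendsto (fun q => minTravelTime a b (slowness Vp q, slowness Vm q)) atTop atTop := by
  have hlower : Tendsto (fun q => minTravelTime a b (slowness Vp 0, slowness Vm 0)
      + c * (slowness Vp q - slowness Vp 0)) atTop atTop :=
    tendsto_atTop_add_const_left _ _ ((tendsto_atTop_add_const_right _ (-slowness Vp 0)
      (slowness.tendsto_atTop hVp)).const_mul_atTop hc)
  refine tendsto_atTop_mono' _ ?_ hlower
  filter_upwards [eventually_ge_atTop 0] with q hq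
  exact minTravelTime_slowness_add_le hc.le hca hb hVp hVm le_rfl hq

end TwoLayers

theorem fictitious_arrival_time_bijective_general (Vp Vm h z x : ℝ)
    (hVp : 0 < Vp) (hVm : 0 < Vm) (hh : 0 < h) :
    let t₀ : ℝ → ℝ := fun q =>
      sInf (Set.range fun ξ : ℝ =>
        Real.sqrt (ξ ^ 2 + h ^ 2) / (Vp * Real.sqrt (1 / (1 + Vp ^ 2 * q ^ 2)))
          + Real.sqrt ((x - ξ) ^ 2 + z ^ 2) / (Vm * Real.sqrt (1 / (1 + Vm ^ 2 * q ^ 2))))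
    ContinuousOn t₀ (Set.Ici 0) ∧ StrictMonoOn t₀ (Set.Ici 0) ∧
      Filter.Tendsto t₀ Filter.atTop Filter.atTop ∧
      Set.BijOn t₀ (Set.Ici 0) (Set.Ici (t₀ 0)) := by
  intro t₀
  have ht₀ : t₀ = fun q => minTravelTime (fun ξ => Real.sqrt (ξ ^ 2 + h ^ 2))
      (fun ξ => Real.sqrt ((x - ξ) ^ 2 + z ^ 2)) (slowness Vp q, slowness Vm q) := by
    simp only [t₀, div_speed_eq_mul_slowness]
    rfl
  have hca ξ : h ≤ Real.sqrt (ξ ^ 2 + h ^ 2) :=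
    Real.le_sqrt_of_sq_le (by nlinarith)
  have hb ξ : 0 ≤ Real.sqrt ((x - ξ) ^ 2 + z ^ 2) := Real.sqrt_nonneg _
  have hcont := continuous_minTravelTime_slowness (fun ξ => hh.le.trans (hca ξ)) hb hVp hVm
  have hmono := strictMonoOn_minTravelTime_slowness hh hca hb hVp hVm
  have htop := tendsto_minTravelTime_slowness hh hca hb hVp hVm
  rw [ht₀]
  exact ⟨hcont.continuousOn, hmono, htop,
    hcont.continuousOn.bijOn_Ici_of_strictMonoOn hmono htop⟩

/-- The fictitious arrival time `t̃₀` is a bijection from `[0,∞)` onto `[t₀,∞)` where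
`t₀ = t̃₀(0)`; in particular it is continuous on `[0,∞)`, strictly increasing there, and tends
to `+∞` as `q → ∞`. -/
theorem fictitious_arrival_time_bijective (Vp Vm h z x : ℝ)
    (hVp : 0 < Vp) (hVm : 0 < Vm) (hh : 0 < h) (hz : z < 0) (hx : 0 < x) :
    let t₀ : ℝ → ℝ := fun q =>
      sInf (Set.range fun ξ : ℝ =>
        Real.sqrt (ξ ^ 2 + h ^ 2) / (Vp * Real.sqrt (1 / (1 + Vp ^ 2 * q ^ 2)))
          + Real.sqrt ((x - ξ) ^ 2 + z ^ 2) / (Vm * Real.sqrt (1 / (1 + Vm ^ 2 * q ^ 2))))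
    ContinuousOn t₀ (Set.Ici 0) ∧ StrictMonoOn t₀ (Set.Ici 0) ∧
      Filter.Tendsto t₀ Filter.atTop Filter.atTop ∧
      Set.BijOn t₀ (Set.Ici 0) (Set.Ici (t₀ 0)) :=
  fictitious_arrival_time_bijective_general Vp Vm h z x hVp hVm hh
end

section
/- For fixed q ∈ ℝ, h > 0, z < 0, x > 0, and fictitious velocities 𝐕⁺(q), 𝐕⁻(q) > 0, the function F(γ, q, t) = −z(1/𝐕⁻(q)² + γ²)^{1/2} + h(1/𝐕⁺(q)² + γ²)^{1/2} + iγx − t, restricted to γ with Re(γ) > 0 and using the principal square root, has at most one root γ for each t > t̃₀(q). -/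
open Complex

lemma aux_sqrt (c : ℝ) (hc : 0 < c) (γ : ℂ) (hre : 0 < γ.re) :
    (((c:ℂ) + γ^2) ^ ((1:ℂ)/2)) ^ 2 = (c:ℂ) + γ^2 ∧
    0 < (((c:ℂ) + γ^2) ^ ((1:ℂ)/2)).re ∧
    (((c:ℂ) + γ^2) ^ ((1:ℂ)/2)).re * (((c:ℂ) + γ^2) ^ ((1:ℂ)/2)).im = γ.re * γ.im := by
  set ζ : ℂ := (c:ℂ) + γ^2 with hζ
  have hζre : ζ.re = c + γ.re^2 - γ.im^2 := by simp [hζ, Complex.add_re, Complex.sq_norm, pow_two, Complex.mul_re]; ring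
  have hζim : ζ.im = 2 * γ.re * γ.im := by simp [hζ, pow_two, Complex.mul_im]; ring
  have hζ0 : ζ ≠ 0 := by
    intro h0
    have h1 : ζ.im = 0 := by rw [h0]; simp
    have h2 : ζ.re = 0 := by rw [h0]; simp
    have hgim : γ.im = 0 := by
      rw [hζim] at h1; nlinarith
    rw [hζre, hgim] at h2; nlinarith
  set w : ℂ := ζ ^ ((1:ℂ)/2) with hw
  have hsq : w ^ 2 = ζ := by
    rw [hw, sq, ← Complex.cpow_add _ _ hζ0]
    norm_num
  have hrenn : 0 ≤ w.re := by
    rw [hw, Complex.cpow_def_of_ne_zero hζ0, Complex.exp_re]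
    have harg : (Complex.log ζ * ((1:ℂ)/2)).im = ζ.arg / 2 := by
      simp [Complex.mul_im, Complex.log_im, Complex.log_re]
      ring
    rw [harg]
    apply mul_nonneg (Real.exp_pos _).le
    apply Real.cos_nonneg_of_mem_Icc
    constructor
    · have := Complex.neg_pi_lt_arg ζ
      linarith
    · have := Complex.arg_le_pi ζ
      have : ζ.arg / 2 ≤ Real.pi / 2 := by linarith
      linarith [Real.pi_pos]
  have hsqre : w.re^2 - w.im^2 = ζ.re := by
    have := congrArg Complex.re hsq
    simpa [pow_two, Complex.mul_re] using this
  have hsqim : 2 * (w.re * w.im) = ζ.im := by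
    have := congrArg Complex.im hsq
    simp [pow_two, Complex.mul_im] at this
    linarith
  have hwre : 0 < w.re := by
    rcases lt_or_eq_of_le hrenn with h | h
    · exact h
    · exfalso
      have h1 : ζ.im = 0 := by rw [← hsqim, ← h]; ring
      have hgim : γ.im = 0 := by rw [hζim] at h1; nlinarith
      have h2 : ζ.re = c + γ.re^2 := by rw [hζre, hgim]; ring
      nlinarith [sq_nonneg w.im]
  refine ⟨hsq, hwre, ?_⟩
  rw [hζim] at hsqim; linarith

lemma aux_neg_of_mul (a b c d : ℝ) (ha : 0 < a) (hc : 0 < c) (hd : d < 0)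
    (h : a * b = c * d) : b < 0 := by nlinarith

lemma aux_nonneg_of_mul (a b c d : ℝ) (ha : 0 < a) (hc : 0 ≤ c) (hd : 0 ≤ d)
    (h : a * b = c * d) : 0 ≤ b := by nlinarith

/-- For each `t` larger than the fictitious arrival time `t̃₀(q)`, the Cagniard–de Hoop function
`F(γ) = −z(1/Vf⁻(q)² + γ²)^{1/2} + h(1/Vf⁺(q)² + γ²)^{1/2} + iγx − t` has at most one root `γ`
with `Re γ > 0`. -/
theorem cagniard_root_unique (Vp Vm h z x q : ℝ)
    (hVp : 0 < Vp) (hVm : 0 < Vm) (hh : 0 < h) (hz : z < 0) (hx : 0 < x) :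
    let Vfp : ℝ := Vp * Real.sqrt (1 / (1 + Vp ^ 2 * q ^ 2))
    let Vfm : ℝ := Vm * Real.sqrt (1 / (1 + Vm ^ 2 * q ^ 2))
    let t₀ : ℝ := sInf (Set.range fun ξ : ℝ =>
      Real.sqrt (ξ ^ 2 + h ^ 2) / Vfp + Real.sqrt ((x - ξ) ^ 2 + z ^ 2) / Vfm)
    let F : ℂ → ℝ → ℂ := fun γ t =>
      -(z : ℂ) * ((1 / (Vfm : ℂ) ^ 2 + γ ^ 2) ^ ((1 : ℂ) / 2))
        + (h : ℂ) * ((1 / (Vfp : ℂ) ^ 2 + γ ^ 2) ^ ((1 : ℂ) / 2))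
        + Complex.I * γ * x - t
    ∀ t : ℝ, t₀ < t → ∀ γ₁ γ₂ : ℂ,
      0 < γ₁.re → 0 < γ₂.re → F γ₁ t = 0 → F γ₂ t = 0 → γ₁ = γ₂ := by
  intro Vfp Vfm t₀ F t ht γ₁ γ₂ hre1 hre2 hF1 hF2
  have hVfp : 0 < Vfp := by
    simp only [Vfp]
    have : 0 < 1 / (1 + Vp ^ 2 * q ^ 2) := by positivity
    exact mul_pos hVp (Real.sqrt_pos.mpr this)
  have hVfm : 0 < Vfm := by
    simp only [Vfm]
    have : 0 < 1 / (1 + Vm ^ 2 * q ^ 2) := by positivity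
    exact mul_pos hVm (Real.sqrt_pos.mpr this)
  set cm : ℝ := 1 / Vfm ^ 2 with hcm_def
  set cp : ℝ := 1 / Vfp ^ 2 with hcp_def
  have hcm : 0 < cm := by positivity
  have hcp : 0 < cp := by positivity
  have hbm : (1 / (Vfm:ℂ)^2 : ℂ) = ((cm : ℝ) : ℂ) := by rw [hcm_def]; push_cast; ring
  have hbp : (1 / (Vfp:ℂ)^2 : ℂ) = ((cp : ℝ) : ℂ) := by rw [hcp_def]; push_cast; ring
  simp only [F, hbm, hbp] at hF1 hF2
  set wm1 : ℂ := (((cm:ℝ):ℂ) + γ₁^2) ^ ((1:ℂ)/2) with hwm1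
  set wm2 : ℂ := (((cm:ℝ):ℂ) + γ₂^2) ^ ((1:ℂ)/2) with hwm2
  set wp1 : ℂ := (((cp:ℝ):ℂ) + γ₁^2) ^ ((1:ℂ)/2) with hwp1
  set wp2 : ℂ := (((cp:ℝ):ℂ) + γ₂^2) ^ ((1:ℂ)/2) with hwp2
  obtain ⟨hsqm1, hwm1re, hwm1prod⟩ := aux_sqrt cm hcm γ₁ hre1
  obtain ⟨hsqm2, hwm2re, hwm2prod⟩ := aux_sqrt cm hcm γ₂ hre2
  obtain ⟨hsqp1, hwp1re, hwp1prod⟩ := aux_sqrt cp hcp γ₁ hre1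
  obtain ⟨hsqp2, hwp2re, hwp2prod⟩ := aux_sqrt cp hcp γ₂ hre2
  rw [← hwm1] at hsqm1 hwm1re hwm1prod
  rw [← hwm2] at hsqm2 hwm2re hwm2prod
  rw [← hwp1] at hsqp1 hwp1re hwp1prod
  rw [← hwp2] at hsqp2 hwp2re hwp2prod
  -- imaginary parts of the root equations
  have him1 := congrArg Complex.im hF1
  have him2 := congrArg Complex.im hF2
  simp only [Complex.add_im, Complex.sub_im, Complex.mul_im, Complex.mul_re,
    Complex.neg_re, Complex.neg_im, Complex.I_re, Complex.I_im,
    Complex.ofReal_re, Complex.ofReal_im, Complex.zero_im] at him1 him2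
  -- each root is in the open fourth quadrant
  have hq1 : γ₁.im < 0 := by
    by_contra hcon
    push_neg at hcon
    have h1 : 0 ≤ wm1.im := aux_nonneg_of_mul _ _ _ _ hwm1re hre1.le hcon hwm1prod
    have h2 : 0 ≤ wp1.im := aux_nonneg_of_mul _ _ _ _ hwp1re hre1.le hcon hwp1prod
    linarith [mul_nonneg (neg_pos.mpr hz).le h1, mul_nonneg hh.le h2,
      mul_pos hx hre1]
  have hq2 : γ₂.im < 0 := by
    by_contra hcon
    push_neg at hcon
    have h1 : 0 ≤ wm2.im := aux_nonneg_of_mul _ _ _ _ hwm2re hre2.le hcon hwm2prod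
    have h2 : 0 ≤ wp2.im := aux_nonneg_of_mul _ _ _ _ hwp2re hre2.le hcon hwp2prod
    linarith [mul_nonneg (neg_pos.mpr hz).le h1, mul_nonneg hh.le h2,
      mul_pos hx hre2]
  have hwm1im : wm1.im < 0 := aux_neg_of_mul _ _ _ _ hwm1re hre1 hq1 hwm1prod
  have hwm2im : wm2.im < 0 := aux_neg_of_mul _ _ _ _ hwm2re hre2 hq2 hwm2prod
  have hwp1im : wp1.im < 0 := aux_neg_of_mul _ _ _ _ hwp1re hre1 hq1 hwp1prod
  have hwp2im : wp2.im < 0 := aux_neg_of_mul _ _ _ _ hwp2re hre2 hq2 hwp2prod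
  -- difference factorization
  have hm : (wm1 - wm2) * (wm1 + wm2) = γ₁^2 - γ₂^2 := by
    linear_combination hsqm1 - hsqm2
  have hp : (wp1 - wp2) * (wp1 + wp2) = γ₁^2 - γ₂^2 := by
    linear_combination hsqp1 - hsqp2
  set D : ℂ := -(z:ℂ) * (γ₁+γ₂) * (wp1+wp2) + (h:ℂ) * (γ₁+γ₂) * (wm1+wm2)
      + Complex.I * (x:ℂ) * (wm1+wm2) * (wp1+wp2) with hD_def
  have key : (γ₁ - γ₂) * D = 0 := by
    rw [hD_def]
    linear_combination (wm1+wm2)*(wp1+wp2)*hF1 - (wm1+wm2)*(wp1+wp2)*hF2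
      + (z:ℂ)*(wp1+wp2)*hm - (h:ℂ)*(wm1+wm2)*hp
  by_contra hne
  have hD0 : D = 0 := by
    rcases mul_eq_zero.mp key with h' | h'
    · exact absurd (sub_eq_zero.mp h') hne
    · exact h'
  have hre := congrArg Complex.re hD0
  have him := congrArg Complex.im hD0
  rw [hD_def] at hre him
  simp only [Complex.add_re, Complex.add_im, Complex.mul_re, Complex.mul_im,
    Complex.neg_re, Complex.neg_im, Complex.I_re, Complex.I_im,
    Complex.ofReal_re, Complex.ofReal_im, Complex.zero_re, Complex.zero_im] at hre him
  -- contradiction via Re(D * conj Sm * conj Sp) > 0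
  have hcontr : -z * (((wp1.re+wp2.re)^2 + (wp1.im+wp2.im)^2) *
        ((γ₁.re+γ₂.re)*(wm1.re+wm2.re) + (γ₁.im+γ₂.im)*(wm1.im+wm2.im)))
      + h * (((wm1.re+wm2.re)^2 + (wm1.im+wm2.im)^2) *
        ((γ₁.re+γ₂.re)*(wp1.re+wp2.re) + (γ₁.im+γ₂.im)*(wp1.im+wp2.im))) = 0 := by
    linear_combination ((wm1.re+wm2.re)*(wp1.re+wp2.re)
        - (wm1.im+wm2.im)*(wp1.im+wp2.im)) * hre
      + ((wm1.re+wm2.re)*(wp1.im+wp2.im) + (wm1.im+wm2.im)*(wp1.re+wp2.re)) * him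
  have ha : 0 < wm1.re + wm2.re := by linarith
  have hb : wm1.im + wm2.im < 0 := by linarith
  have hpp : 0 < wp1.re + wp2.re := by linarith
  have hr : wp1.im + wp2.im < 0 := by linarith
  have hu : 0 < γ₁.re + γ₂.re := by linarith
  have hv : γ₁.im + γ₂.im < 0 := by linarith
  have hA1 : 0 < (γ₁.re+γ₂.re)*(wm1.re+wm2.re) + (γ₁.im+γ₂.im)*(wm1.im+wm2.im) := by
    linarith [mul_pos hu ha, mul_pos_of_neg_of_neg hv hb]
  have hA2 : 0 < (γ₁.re+γ₂.re)*(wp1.re+wp2.re) + (γ₁.im+γ₂.im)*(wp1.im+wp2.im) := by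
    linarith [mul_pos hu hpp, mul_pos_of_neg_of_neg hv hr]
  have hNp : 0 < (wp1.re+wp2.re)^2 + (wp1.im+wp2.im)^2 := by positivity
  have hNm : 0 < (wm1.re+wm2.re)^2 + (wm1.im+wm2.im)^2 := by positivity
  linarith [mul_pos (mul_pos (neg_pos.mpr hz) hNp) hA1,
    mul_pos (mul_pos hh hNm) hA2]
end
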